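/- Let T > 0, M > 0, N ∈ ℕ₊, τ = T/N ≤ 1 and t_k = kτ. Let Ã : [0,T] → ℝ^{n×n} with ‖Ã(t)‖ ≤ M for all t, and let Ã_0,…,Ã_{N−1} ∈ ℝ^{n×n} satisfy ‖Ã_k − Ã(t)‖ ≤ Mτ for all t ∈ [t_k, t_{k+1}]; let B̃ ∈ ℝ^{n×m} with ‖B̃‖ ≤ M. Let l ∈ {0,…,N−1}, L ≥ 0, and let u_l,…,u_{N−1} ∈ ℝ^m with ‖u_k‖ ≤ L. Define the recursion x_{k+1} = (I + τÃ_k)x_k + τB̃u_k starting from x_l ∈ ℝⁿ, and let x̌ : [t_l,T] → ℝⁿ be continuously differentiable with x̌′(t) = Ã(t)x̌(t) + B̃u_k for t ∈ [t_k, t_{k+1}) (k = l,…,N−1) and x̌(t_l) = x_l. Then there exists a constant C depending only on M and T (independent of l, N, x_l and L) such that sup_{t∈[t_l,T]} ‖x̌(t)‖ ≤ C(‖x_l‖ + L) and max_{k=l,…,N} ‖x̌(t_k) − x_k‖ ≤ Cτ(‖x_l‖ + L). -/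

import Mathlib

open Matrix Set

/-- The spectral norm of a real matrix: the operator norm induced by the Euclidean norms. -/
noncomputable def sNorm {p q : ℕ} (M : Matrix (Fin p) (Fin q) ℝ) : ℝ :=
  ‖LinearMap.toContinuousLinearMap (Matrix.toEuclideanLin M)‖

/-- The Euclidean norm of a real vector. -/
noncomputable def eNorm {p : ℕ} (v : Fin p → ℝ) : ℝ :=
  ‖(WithLp.equiv 2 (Fin p → ℝ)).symm v‖

lemma eNorm_mulVec_le {p q : ℕ} (A : Matrix (Fin p) (Fin q) ℝ) (v : Fin q → ℝ) :
    eNorm (A *ᵥ v) ≤ sNorm A * eNorm v := by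
  have h : (WithLp.equiv 2 (Fin p → ℝ)).symm (A *ᵥ v)
      = (LinearMap.toContinuousLinearMap (Matrix.toEuclideanLin A))
        ((WithLp.equiv 2 (Fin q → ℝ)).symm v) := by
    simp [Matrix.toEuclideanLin_apply]
  rw [eNorm, eNorm, h]
  exact (LinearMap.toContinuousLinearMap (Matrix.toEuclideanLin A)).le_opNorm _

lemma sNorm_neg {p q : ℕ} (A : Matrix (Fin p) (Fin q) ℝ) : sNorm (-A) = sNorm A := by
  unfold sNorm; rw [map_neg, map_neg, norm_neg]

lemma sNorm_add_le {p q : ℕ} (A B : Matrix (Fin p) (Fin q) ℝ) :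
    sNorm (A + B) ≤ sNorm A + sNorm B := by
  unfold sNorm; rw [map_add, map_add]; exact norm_add_le _ _

set_option maxHeartbeats 2000000 in
theorem stmt13 (T M : ℝ) (hT : 0 < T) (hM : 0 < M) :
    ∃ C : ℝ, ∀ (n m N : ℕ), 0 < N → T / (N : ℝ) ≤ 1 →
      ∀ (At : ℝ → Matrix (Fin n) (Fin n) ℝ) (Ad : ℕ → Matrix (Fin n) (Fin n) ℝ)
        (Bt : Matrix (Fin n) (Fin m) ℝ),
      (∀ t ∈ Icc 0 T, sNorm (At t) ≤ M) →
      (∀ k < N, ∀ t ∈ Icc ((k : ℝ) * (T / (N : ℝ))) (((k : ℝ) + 1) * (T / (N : ℝ))),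
        sNorm (Ad k - At t) ≤ M * (T / (N : ℝ))) →
      sNorm Bt ≤ M →
      ∀ l < N, ∀ L : ℝ, 0 ≤ L →
      ∀ (u : ℕ → Fin m → ℝ), (∀ k, l ≤ k → k < N → eNorm (u k) ≤ L) →
      ∀ (x : ℕ → Fin n → ℝ) (xl : Fin n → ℝ) (xc : ℝ → Fin n → ℝ),
        x l = xl →
        (∀ k, l ≤ k → k < N →
          x (k + 1) = (1 + (T / (N : ℝ)) • Ad k) *ᵥ x k + (T / (N : ℝ)) • (Bt *ᵥ u k)) →
        xc ((l : ℝ) * (T / (N : ℝ))) = xl →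
        (∀ i, ContinuousOn (fun t => xc t i) (Icc ((l : ℝ) * (T / (N : ℝ))) T)) →
        (∀ k, l ≤ k → k < N → ∀ i,
          ∀ t ∈ Ico ((k : ℝ) * (T / (N : ℝ))) (((k : ℝ) + 1) * (T / (N : ℝ))),
            HasDerivAt (fun s => xc s i) ((At t *ᵥ xc t + Bt *ᵥ u k) i) t) →
        (∀ t ∈ Icc ((l : ℝ) * (T / (N : ℝ))) T, eNorm (xc t) ≤ C * (eNorm xl + L)) ∧
        (∀ k, l ≤ k → k ≤ N →
          eNorm (xc ((k : ℝ) * (T / (N : ℝ))) - x k) ≤ C * (T / (N : ℝ)) * (eNorm xl + L)) := by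
  set C1 := Real.exp (M * T) with hC1def
  set K0 := M * M * (C1 + 1) + M * C1 with hK0def
  set C2 := K0 * Real.exp (2 * M * T) / (2 * M) with hC2def
  refine ⟨max C1 C2, ?_⟩
  intro n m N hN hτle At Ad Bt hAt hAd hBt l hlN L hL u hu x xl xc hx0 hrec hxc0 hxcont hderiv
  set τ := T / (N : ℝ) with hτdef
  have hNpos : (0 : ℝ) < N := by exact_mod_cast hN
  have hτpos : 0 < τ := div_pos hT hNpos
  have hNτ : (N : ℝ) * τ = T := by rw [hτdef]; field_simp
  set Λ := eNorm xl + L with hΛdef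
  have hxl0 : 0 ≤ eNorm xl := norm_nonneg _
  have hΛ0 : 0 ≤ Λ := add_nonneg hxl0 hL
  have hLΛ : L ≤ Λ := le_add_of_nonneg_left hxl0
  have hC11 : 1 ≤ C1 := Real.one_le_exp (by positivity)
  have hK00 : 0 ≤ K0 := by
    rw [hK0def]
    have h1 : 0 ≤ M * M * (C1 + 1) := mul_nonneg (mul_nonneg hM.le hM.le) (by linarith)
    have h2 : 0 ≤ M * C1 := mul_nonneg hM.le (by linarith)
    linarith
  clear_value C1 K0 C2 τ Λ
  set toE := fun v : Fin n → ℝ => (WithLp.equiv 2 (Fin n → ℝ)).symm v with htoEdef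
  set X : ℝ → EuclideanSpace ℝ (Fin n) := fun t => toE (xc t) with hXdef
  have htl0 : 0 ≤ (l : ℝ) * τ := mul_nonneg (Nat.cast_nonneg l) hτpos.le
  have hnode : ∀ k : ℕ, k ≤ N → (k : ℝ) * τ ≤ T := by
    intro k hk
    rw [← hNτ]
    exact mul_le_mul_of_nonneg_right (by exact_mod_cast hk) hτpos.le
  have hsub0T : Icc ((l : ℝ) * τ) T ⊆ Icc 0 T := Icc_subset_Icc htl0 le_rfl
  -- continuity of X
  have hXcont : ContinuousOn X (Icc ((l : ℝ) * τ) T) := by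
    have h1 : ContinuousOn (fun t => xc t) (Icc ((l : ℝ) * τ) T) := continuousOn_pi.mpr hxcont
    exact ((PiLp.continuousLinearEquiv 2 ℝ (fun _ : Fin n => ℝ)).symm.continuous.comp_continuousOn h1)
  -- derivative of X on each piece
  have hX' : ∀ k, l ≤ k → k < N → ∀ t ∈ Ico ((k : ℝ) * τ) (((k : ℝ) + 1) * τ),
      HasDerivAt X (toE (At t *ᵥ xc t + Bt *ᵥ u k)) t := by
    intro k hk1 hk2 t ht
    have h1 : HasDerivAt (fun s => xc s) (At t *ᵥ xc t + Bt *ᵥ u k) t :=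
      hasDerivAt_pi.mpr (fun i => hderiv k hk1 hk2 i t ht)
    exact (((PiLp.continuousLinearEquiv 2 ℝ (fun _ : Fin n => ℝ)).symm :
      (Fin n → ℝ) →L[ℝ] EuclideanSpace ℝ (Fin n)).hasFDerivAt.comp_hasDerivAt t h1)
  -- derivative value bound
  have hFb : ∀ k, l ≤ k → k < N → ∀ t ∈ Icc ((l : ℝ) * τ) T,
      eNorm (At t *ᵥ xc t + Bt *ᵥ u k) ≤ M * eNorm (xc t) + M * L := by
    intro k hk1 hk2 t ht
    calc eNorm (At t *ᵥ xc t + Bt *ᵥ u k)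
        ≤ eNorm (At t *ᵥ xc t) + eNorm (Bt *ᵥ u k) :=
          norm_add_le (WithLp.toLp 2 (At t *ᵥ xc t)) (WithLp.toLp 2 (Bt *ᵥ u k))
      _ ≤ sNorm (At t) * eNorm (xc t) + sNorm Bt * eNorm (u k) :=
          add_le_add (eNorm_mulVec_le _ _) (eNorm_mulVec_le _ _)
      _ ≤ M * eNorm (xc t) + M * L := by
          have h1 := hAt t (hsub0T ht)
          have h2 := hu k hk1 hk2
          have h3 : (0:ℝ) ≤ eNorm (xc t) := norm_nonneg _
          have h4 : (0:ℝ) ≤ eNorm (u k) := norm_nonneg _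
          have h5 : (0:ℝ) ≤ sNorm Bt := norm_nonneg _
          have h6 : sNorm (At t) * eNorm (xc t) ≤ M * eNorm (xc t) :=
            mul_le_mul_of_nonneg_right h1 h3
          have h7 : sNorm Bt * eNorm (u k) ≤ M * L := mul_le_mul hBt h2 h4 hM.le
          linarith
  -- floor facts
  have hfloor : ∀ t, (l : ℝ) * τ ≤ t → t < T →
      l ≤ ⌊t / τ⌋₊ ∧ ⌊t / τ⌋₊ < N ∧ (⌊t / τ⌋₊ : ℝ) * τ ≤ t ∧ t < ((⌊t / τ⌋₊ : ℝ) + 1) * τ := by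
    intro t ht1 ht2
    have ht0 : 0 ≤ t := le_trans htl0 ht1
    have hq0 : 0 ≤ t / τ := div_nonneg ht0 hτpos.le
    refine ⟨?_, ?_, ?_, ?_⟩
    · exact Nat.le_floor ((le_div_iff₀ hτpos).mpr ht1)
    · exact (Nat.floor_lt hq0).mpr ((div_lt_iff₀ hτpos).mpr (by rw [hNτ]; exact ht2))
    · exact (le_div_iff₀ hτpos).mp (Nat.floor_le hq0)
    · exact (div_lt_iff₀ hτpos).mp (Nat.lt_floor_add_one (t / τ))
  -- Gronwall
  have grb : ∀ t ∈ Icc ((l : ℝ) * τ) T, ‖X t‖ ≤ gronwallBound (eNorm xl) M (M * L) (t - (l : ℝ) * τ) := by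
    apply norm_le_gronwallBound_of_norm_deriv_right_le hXcont
      (f' := fun t => toE (At t *ᵥ xc t + Bt *ᵥ u ⌊t / τ⌋₊))
    · intro t ht
      obtain ⟨h1, h2, h3, h4⟩ := hfloor t ht.1 ht.2
      exact (hX' _ h1 h2 t ⟨h3, h4⟩).hasDerivWithinAt
    · show ‖X ((l : ℝ) * τ)‖ ≤ eNorm xl
      have : X ((l : ℝ) * τ) = toE xl := by rw [hXdef]; simp only; rw [hxc0]
      rw [this]; exact le_rfl
    · intro t ht
      obtain ⟨h1, h2, _, _⟩ := hfloor t ht.1 ht.2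
      exact hFb _ h1 h2 t (Ico_subset_Icc_self ht)
  have part1 : ∀ t ∈ Icc ((l : ℝ) * τ) T, eNorm (xc t) ≤ C1 * Λ := by
    intro t ht
    have h := grb t ht
    rw [gronwallBound_of_K_ne_0 hM.ne'] at h
    have h1 : t - (l : ℝ) * τ ≤ T := by
      have := ht.2; linarith
    have h2 : 0 ≤ t - (l : ℝ) * τ := by have := ht.1; linarith
    have he : Real.exp (M * (t - (l : ℝ) * τ)) ≤ C1 := by
      rw [hC1def]
      exact Real.exp_le_exp.mpr (mul_le_mul_of_nonneg_left h1 hM.le)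
    have he1 : 1 ≤ Real.exp (M * (t - (l : ℝ) * τ)) := Real.one_le_exp (mul_nonneg hM.le h2)
    beta_reduce at h
    have hd : M * L / M = L := by field_simp
    rw [hd] at h
    have hXe : ‖X t‖ = eNorm (xc t) := rfl
    rw [hXe] at h
    have hb1 := mul_le_mul_of_nonneg_left he hxl0
    have hb2 := mul_le_mul_of_nonneg_left he hL
    rw [hΛdef]
    nlinarith
  -- uniform derivative bound
  have hDb : ∀ k, l ≤ k → k < N → ∀ t ∈ Icc ((l : ℝ) * τ) T,
      eNorm (At t *ᵥ xc t + Bt *ᵥ u k) ≤ M * (C1 + 1) * Λ := by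
    intro k hk1 hk2 t ht
    have h1 := hFb k hk1 hk2 t ht
    have h2 := part1 t ht
    have h3 : M * eNorm (xc t) ≤ M * (C1 * Λ) := mul_le_mul_of_nonneg_left h2 hM.le
    have h4 : M * L ≤ M * Λ := mul_le_mul_of_nonneg_left hLΛ hM.le
    nlinarith
  -- discrete error estimate by induction
  have key : ∀ j, l ≤ j → j ≤ N →
      eNorm (xc ((j : ℝ) * τ) - x j) ≤ ((1 + 2 * M * τ) ^ (j - l) - 1) * (τ * K0 * Λ / (2 * M)) := by
    intro j hj
    induction j, hj using Nat.le_induction with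
    | base =>
      intro _
      rw [hxc0, hx0, sub_self, Nat.sub_self, pow_zero, sub_self, zero_mul]
      have : eNorm (0 : Fin n → ℝ) = 0 := norm_zero
      rw [this]
    | succ j hj ih =>
      intro hjN
      have hjlt : j < N := hjN
      have errle := ih hjlt.le
      set tj := (j : ℝ) * τ with htjdef
      set tj1 := ((j : ℝ) + 1) * τ with htj1def
      have htj1T : tj1 ≤ T := by
        have := hnode (j + 1) hjN
        push_cast at this
        rw [htj1def]; linarith
      have hltj : (l : ℝ) * τ ≤ tj := by
        rw [htjdef]
        exact mul_le_mul_of_nonneg_right (by exact_mod_cast hj) hτpos.le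
      have htjtj1 : tj ≤ tj1 := by rw [htjdef, htj1def]; nlinarith [hτpos]
      have subIcc : Icc tj tj1 ⊆ Icc ((l : ℝ) * τ) T := Icc_subset_Icc hltj htj1T
      have htjmem : tj ∈ Icc tj tj1 := ⟨le_rfl, htjtj1⟩
      have hXcj : ContinuousOn X (Icc tj tj1) := hXcont.mono subIcc
      have hderj : ∀ t ∈ Ico tj tj1,
          HasDerivWithinAt X (toE (At t *ᵥ xc t + Bt *ᵥ u j)) (Ici t) t :=
        fun t ht => (hX' j hj hjlt t ht).hasDerivWithinAt
      -- oscillation bound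
      have osc : ∀ t ∈ Icc tj tj1, ‖X t - X tj‖ ≤ (M * (C1 + 1) * Λ) * (t - tj) :=
        norm_image_sub_le_of_norm_deriv_right_le_segment hXcj hderj
          (fun t ht => hDb j hj hjlt t (subIcc (Ico_subset_Icc_self ht)))
      -- the comparison function y
      set w : EuclideanSpace ℝ (Fin n) := toE (Ad j *ᵥ x j + Bt *ᵥ u j) with hwdef
      set y : ℝ → EuclideanSpace ℝ (Fin n) := fun t => X t - (t - tj) • w with hydef
      have ycont : ContinuousOn y (Icc tj tj1) :=
        hXcj.sub (((continuous_id.sub continuous_const).smul continuous_const).continuousOn)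
      have yder : ∀ t ∈ Ico tj tj1,
          HasDerivWithinAt y (toE (At t *ᵥ xc t + Bt *ᵥ u j) - w) (Ici t) t := by
        intro t ht
        have h2 : HasDerivAt (fun s : ℝ => (s - tj) • w) w t := by
          simpa using ((hasDerivAt_id t).sub_const tj).smul_const w
        exact ((hX' j hj hjlt t ht).sub h2).hasDerivWithinAt
      set err := eNorm (xc tj - x j) with herrdef
      have herr0 : 0 ≤ err := norm_nonneg _
      have herrX : ‖X tj - toE (x j)‖ = err := rfl
      have ybound : ∀ t ∈ Ico tj tj1,
          ‖toE (At t *ᵥ xc t + Bt *ᵥ u j) - w‖ ≤ 2 * M * err + τ * K0 * Λ := by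
        intro t ht
        have htIcc : t ∈ Icc tj tj1 := Ico_subset_Icc_self ht
        have hsplit : (At t *ᵥ xc t + Bt *ᵥ u j) - (Ad j *ᵥ x j + Bt *ᵥ u j)
            = At t *ᵥ (xc t - xc tj) + (At t - Ad j) *ᵥ xc tj + Ad j *ᵥ (xc tj - x j) := by
          rw [Matrix.mulVec_sub, Matrix.mulVec_sub, Matrix.sub_mulVec]
          abel
        have heq : toE (At t *ᵥ xc t + Bt *ᵥ u j) - w
            = toE (At t *ᵥ (xc t - xc tj) + (At t - Ad j) *ᵥ xc tj + Ad j *ᵥ (xc tj - x j)) := by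
          rw [hwdef]
          show toE ((At t *ᵥ xc t + Bt *ᵥ u j) - (Ad j *ᵥ x j + Bt *ᵥ u j)) = _
          rw [hsplit]
        rw [heq]
        have htri : eNorm (At t *ᵥ (xc t - xc tj) + (At t - Ad j) *ᵥ xc tj + Ad j *ᵥ (xc tj - x j))
            ≤ eNorm (At t *ᵥ (xc t - xc tj)) + eNorm ((At t - Ad j) *ᵥ xc tj)
              + eNorm (Ad j *ᵥ (xc tj - x j)) :=
          le_trans (norm_add_le (WithLp.toLp 2 (At t *ᵥ (xc t - xc tj) + (At t - Ad j) *ᵥ xc tj))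
            (WithLp.toLp 2 (Ad j *ᵥ (xc tj - x j))))
            (add_le_add_left (norm_add_le (WithLp.toLp 2 (At t *ᵥ (xc t - xc tj)))
              (WithLp.toLp 2 ((At t - Ad j) *ᵥ xc tj))) _)
        -- term 1
        have hosc : eNorm (xc t - xc tj) ≤ (M * (C1 + 1) * Λ) * τ := by
          have h1 : eNorm (xc t - xc tj) = ‖X t - X tj‖ := rfl
          rw [h1]
          calc ‖X t - X tj‖ ≤ (M * (C1 + 1) * Λ) * (t - tj) := osc t htIcc
            _ ≤ (M * (C1 + 1) * Λ) * τ := by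
                have h2 : t - tj ≤ τ := by
                  have h4 := ht.2; rw [htj1def] at h4; rw [htjdef]; nlinarith
                have h3 : 0 ≤ M * (C1 + 1) * Λ :=
                  mul_nonneg (mul_nonneg hM.le (by linarith)) hΛ0
                exact mul_le_mul_of_nonneg_left h2 h3
        have ht1 : eNorm (At t *ᵥ (xc t - xc tj)) ≤ M * ((M * (C1 + 1) * Λ) * τ) := by
          calc eNorm (At t *ᵥ (xc t - xc tj)) ≤ sNorm (At t) * eNorm (xc t - xc tj) :=
              eNorm_mulVec_le _ _
            _ ≤ M * ((M * (C1 + 1) * Λ) * τ) :=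
                mul_le_mul (hAt t (hsub0T (subIcc htIcc))) hosc (norm_nonneg _) hM.le
        -- term 2
        have hAdt : sNorm (At t - Ad j) ≤ M * τ := by
          rw [← sNorm_neg, neg_sub]
          exact hAd j hjlt t htIcc
        have ht2 : eNorm ((At t - Ad j) *ᵥ xc tj) ≤ M * τ * (C1 * Λ) := by
          calc eNorm ((At t - Ad j) *ᵥ xc tj) ≤ sNorm (At t - Ad j) * eNorm (xc tj) :=
              eNorm_mulVec_le _ _
            _ ≤ M * τ * (C1 * Λ) :=
                mul_le_mul hAdt (part1 tj (subIcc htjmem)) (norm_nonneg _)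
                  (mul_nonneg hM.le hτpos.le)
        -- term 3
        have hAdj : sNorm (Ad j) ≤ 2 * M := by
          calc sNorm (Ad j) = sNorm ((Ad j - At t) + At t) := by rw [sub_add_cancel]
            _ ≤ sNorm (Ad j - At t) + sNorm (At t) := sNorm_add_le _ _
            _ ≤ M * τ + M := add_le_add (hAd j hjlt t htIcc) (hAt t (hsub0T (subIcc htIcc)))
            _ ≤ 2 * M := by nlinarith [mul_le_mul_of_nonneg_left hτle hM.le]
        have ht3 : eNorm (Ad j *ᵥ (xc tj - x j)) ≤ 2 * M * err := by
          calc eNorm (Ad j *ᵥ (xc tj - x j)) ≤ sNorm (Ad j) * eNorm (xc tj - x j) :=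
              eNorm_mulVec_le _ _
            _ ≤ 2 * M * err := mul_le_mul_of_nonneg_right hAdj herr0
        calc ‖toE (At t *ᵥ (xc t - xc tj) + (At t - Ad j) *ᵥ xc tj + Ad j *ᵥ (xc tj - x j))‖
            ≤ eNorm (At t *ᵥ (xc t - xc tj)) + eNorm ((At t - Ad j) *ᵥ xc tj)
              + eNorm (Ad j *ᵥ (xc tj - x j)) := htri
          _ ≤ M * ((M * (C1 + 1) * Λ) * τ) + M * τ * (C1 * Λ) + 2 * M * err :=
              add_le_add (add_le_add ht1 ht2) ht3
          _ ≤ 2 * M * err + τ * K0 * Λ := by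
              rw [hK0def]
              have h8 : M * ((M * (C1 + 1) * Λ) * τ) + M * τ * (C1 * Λ)
                  = τ * (M * M * (C1 + 1) + M * C1) * Λ := by ring
              linarith
      -- step estimate
      have hstep : ∀ t ∈ Icc tj tj1, ‖y t - y tj‖ ≤ (2 * M * err + τ * K0 * Λ) * (t - tj) :=
        norm_image_sub_le_of_norm_deriv_right_le_segment ycont yder ybound
      have hstep1 : ‖y tj1 - y tj‖ ≤ (2 * M * err + τ * K0 * Λ) * τ := by
        have h1 := hstep tj1 ⟨htjtj1, le_rfl⟩
        have h2 : tj1 - tj = τ := by rw [htjdef, htj1def]; ring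
        rwa [h2] at h1
      -- recursion
      have hx1 : toE (x (j + 1)) = toE (x j) + τ • w := by
        rw [hrec j hj hjlt]
        have h1 : (1 + τ • Ad j) *ᵥ x j + τ • (Bt *ᵥ u j)
            = x j + τ • (Ad j *ᵥ x j + Bt *ᵥ u j) := by
          rw [Matrix.add_mulVec, Matrix.one_mulVec, Matrix.smul_mulVec, smul_add]
          abel
        rw [h1]
        rfl
      have hytj : y tj = X tj := by rw [hydef]; simp
      have hytj1 : y tj1 = X tj1 - τ • w := by
        rw [hydef]
        simp only
        have h2 : tj1 - tj = τ := by rw [htjdef, htj1def]; ring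
        rw [h2]
      have hkey2 : X tj1 - toE (x (j + 1)) = (y tj1 - y tj) + (X tj - toE (x j)) := by
        rw [hytj, hytj1, hx1]
        abel
      have hcast : ((j + 1 : ℕ) : ℝ) * τ = tj1 := by rw [htj1def]; push_cast; ring
      have hgoal1 : eNorm (xc (((j + 1 : ℕ) : ℝ) * τ) - x (j + 1))
          ≤ (2 * M * err + τ * K0 * Λ) * τ + err := by
        have h1 : eNorm (xc (((j + 1 : ℕ) : ℝ) * τ) - x (j + 1)) = ‖X tj1 - toE (x (j + 1))‖ := by
          rw [hcast]; rfl
        rw [h1, hkey2]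
        calc ‖(y tj1 - y tj) + (X tj - toE (x j))‖
            ≤ ‖y tj1 - y tj‖ + ‖X tj - toE (x j)‖ := norm_add_le _ _
          _ ≤ (2 * M * err + τ * K0 * Λ) * τ + err := by
              have h2 : ‖X tj - toE (x j)‖ = err := rfl
              rw [h2]
              exact add_le_add_left hstep1 _
      -- combine with IH
      have hdsucc : j + 1 - l = (j - l) + 1 := by omega
      rw [hdsucc]
      set d := j - l with hddef
      set q := (1 + 2 * M * τ) ^ d with hqdef
      have hq1 : (1:ℝ) ≤ q := by
        rw [hqdef]
        calc (1:ℝ) = 1 ^ d := (one_pow d).symm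
          _ ≤ (1 + 2 * M * τ) ^ d :=
            pow_le_pow_left₀ zero_le_one (by nlinarith [mul_pos hM hτpos]) d
      have hpow : (1 + 2 * M * τ) ^ (d + 1) = (1 + 2 * M * τ) * q := by
        rw [hqdef, pow_succ]; ring
      rw [hpow]
      set β := τ * K0 * Λ / (2 * M) with hβdef
      clear_value err d q β
      have hβ0 : 0 ≤ β := by
        rw [hβdef]
        exact div_nonneg (mul_nonneg (mul_nonneg hτpos.le hK00) hΛ0) (by linarith)
      have hβeq : 2 * M * β = τ * K0 * Λ := by
        rw [hβdef]; field_simp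
      have hmul : (1 + 2 * M * τ) * err ≤ (1 + 2 * M * τ) * ((q - 1) * β) :=
        mul_le_mul_of_nonneg_left errle (by nlinarith [mul_pos hM hτpos])
      have hβeq2 : τ * K0 * Λ * τ = 2 * M * β * τ := by rw [hβeq]
      calc eNorm (xc (((j + 1 : ℕ) : ℝ) * τ) - x (j + 1))
          ≤ (2 * M * err + τ * K0 * Λ) * τ + err := hgoal1
        _ ≤ ((1 + 2 * M * τ) * q - 1) * β := by nlinarith [hmul, hβeq2]
  -- conclude
  have hβ0' : 0 ≤ τ * K0 * Λ / (2 * M) :=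
    div_nonneg (mul_nonneg (mul_nonneg hτpos.le hK00) hΛ0) (by linarith)
  constructor
  · intro t ht
    exact le_trans (part1 t ht) (mul_le_mul_of_nonneg_right (le_max_left _ _) hΛ0)
  · intro k hk1 hk2
    have h := key k hk1 hk2
    have hP1 : (1:ℝ) ≤ 1 + 2 * M * τ := by nlinarith [mul_pos hM hτpos]
    have hq : (1 + 2 * M * τ) ^ (k - l) ≤ Real.exp (2 * M * T) := by
      calc (1 + 2 * M * τ) ^ (k - l) ≤ (1 + 2 * M * τ) ^ N :=
          pow_le_pow_right₀ hP1 (le_trans (Nat.sub_le k l) hk2)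
        _ ≤ Real.exp (2 * M * τ) ^ N :=
          pow_le_pow_left₀ (by nlinarith [mul_pos hM hτpos])
            (by have := Real.add_one_le_exp (2 * M * τ); linarith) N
        _ = Real.exp ((N : ℝ) * (2 * M * τ)) := (Real.exp_nat_mul _ N).symm
        _ = Real.exp (2 * M * T) := by
            rw [show (N : ℝ) * (2 * M * τ) = 2 * M * ((N : ℝ) * τ) by ring, hNτ]
    calc eNorm (xc ((k : ℝ) * τ) - x k)
        ≤ ((1 + 2 * M * τ) ^ (k - l) - 1) * (τ * K0 * Λ / (2 * M)) := h
      _ ≤ Real.exp (2 * M * T) * (τ * K0 * Λ / (2 * M)) :=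
          mul_le_mul_of_nonneg_right (by linarith) hβ0'
      _ = C2 * τ * Λ := by
          rw [hC2def]
          field_simp
      _ ≤ max C1 C2 * τ * Λ := by
          apply mul_le_mul_of_nonneg_right
            (mul_le_mul_of_nonneg_right (le_max_right _ _) hτpos.le) hΛ0
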